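/- For every τ > 0, the function G₁₂(τ) = (4/π²)·E(κ(τ))·K(κ(τ)) is differentiable at τ with derivative G₁₂'(τ) = (16/(π²κ(τ)²))·[E(κ(τ))² − κ̃(τ)²·K(κ(τ))²]. -/

import Mathlib

/-!
Differentiating under the integral sign gives `E' = (E - K) / k` and
`k K' = E / (1 - k²) - K`; the second identity holds because `k sin²α / (1 - k² sin²α)^{3/2}`
differs from a combination of the integrands of `E` and `K` by the derivative of
`sin α cos α / √(1 - k² sin²α)`, which integrates to zero over `[0, π/2]`. Hence
`(E K)' = (E² - (1 - k²) K²) / (k (1 - k²))`, and the chain rule with `κ' = 4 κ̃² / κ` and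
`1 - κ² = κ̃²` gives the derivative of `G₁₂`.
-/

open Real Filter Topology

/-- Complete elliptic integral of the first kind. -/
noncomputable def ellipticK (k : ℝ) : ℝ :=
  ∫ α in (0:ℝ)..(Real.pi / 2), 1 / Real.sqrt (1 - k ^ 2 * Real.sin α ^ 2)

/-- Complete elliptic integral of the second kind. -/
noncomputable def ellipticE (k : ℝ) : ℝ :=
  ∫ α in (0:ℝ)..(Real.pi / 2), Real.sqrt (1 - k ^ 2 * Real.sin α ^ 2)

/-- κ(τ) = √(1 − e^{−8τ}). -/
noncomputable def kappa (τ : ℝ) : ℝ := Real.sqrt (1 - Real.exp (-8 * τ))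

/-- κ̃(τ) = e^{−4τ}. -/
noncomputable def kappaT (τ : ℝ) : ℝ := Real.exp (-4 * τ)

/-- Diagonal entry of the reduced covariance matrix of the resonant mode. -/
noncomputable def G₁₁ (τ : ℝ) : ℝ :=
  -(4 / (Real.pi ^ 2 * kappa τ ^ 2)) *
    ((ellipticE (kappa τ) - kappaT τ ^ 2 * ellipticK (kappa τ)) *
      (ellipticK (kappa τ) - ellipticE (kappa τ)))

/-- Off-diagonal entry of the reduced covariance matrix of the resonant mode. -/
noncomputable def G₁₂ (τ : ℝ) : ℝ :=
  (4 / Real.pi ^ 2) * (ellipticE (kappa τ) * ellipticK (kappa τ))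

open Set intervalIntegral

theorem hasDerivAt_intervalIntegral_comp_sq_mul_sq {φ φ' s : ℝ → ℝ}
    (hφ : ∀ u < 1, HasDerivAt φ (φ' u) u) (hφ' : ContinuousOn φ' (Iio 1))
    (hs : Continuous s) (hs1 : ∀ t, s t ^ 2 ≤ 1) (a b : ℝ) {k : ℝ} (hk : k ^ 2 < 1) :
    HasDerivAt (fun x => ∫ t in a..b, φ (x ^ 2 * s t ^ 2))
      (∫ t in a..b, 2 * k * s t ^ 2 * φ' (k ^ 2 * s t ^ 2)) k := by
  obtain ⟨c, hkc, hc1⟩ := exists_between hk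
  have hlt : ∀ {x : ℝ} (t : ℝ), x ^ 2 < 1 → x ^ 2 * s t ^ 2 < 1 := fun t hx =>
    (mul_le_of_le_one_right (sq_nonneg _) (hs1 t)).trans_lt hx
  have hφc : ContinuousOn φ (Iio 1) := fun u hu => (hφ u hu).continuousAt.continuousWithinAt
  have hF : ∀ x : ℝ, x ^ 2 < 1 → Continuous fun t => φ (x ^ 2 * s t ^ 2) := fun x hx =>
    hφc.comp_continuous (by fun_prop) fun t => hlt t hx
  have hF' : Continuous fun t => 2 * k * s t ^ 2 * φ' (k ^ 2 * s t ^ 2) :=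
    (by fun_prop : Continuous fun t => 2 * k * s t ^ 2).mul
      (hφ'.comp_continuous (by fun_prop) fun t => hlt t hk)
  obtain ⟨M, hM⟩ := isCompact_Icc.exists_bound_of_continuousOn
    (hφ'.mono fun u (hu : u ∈ Icc 0 c) => hu.2.trans_lt hc1)
  have hnhds : {x : ℝ | x ^ 2 < c} ∈ 𝓝 k :=
    (isOpen_lt (by fun_prop) continuous_const).mem_nhds hkc
  refine (hasDerivAt_integral_of_dominated_loc_of_deriv_le (μ := MeasureTheory.volume)
    (F' := fun x t => 2 * x * s t ^ 2 * φ' (x ^ 2 * s t ^ 2)) (bound := fun _ => 2 * M) hnhds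
    (eventually_of_mem hnhds fun x hx => (hF x (hx.trans hc1)).aestronglyMeasurable)
    ((hF k hk).intervalIntegrable _ _) hF'.aestronglyMeasurable
    (MeasureTheory.ae_of_all _ fun t _ x (hx : x ^ 2 < c) => ?_) intervalIntegrable_const
    (MeasureTheory.ae_of_all _ fun t _ x (hx : x ^ 2 < c) => ?_)).2
  · have hx1 : |x| ≤ 1 := (sq_le_one_iff_abs_le_one x).1 (hx.trans hc1).le
    have hu : x ^ 2 * s t ^ 2 ∈ Icc 0 c :=
      ⟨by positivity, (mul_le_of_le_one_right (sq_nonneg _) (hs1 t)).trans hx.le⟩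
    rw [norm_mul, norm_mul, norm_mul, Real.norm_two, Real.norm_eq_abs, norm_pow, Real.norm_eq_abs,
      sq_abs]
    calc 2 * |x| * s t ^ 2 * ‖φ' (x ^ 2 * s t ^ 2)‖ ≤ 2 * 1 * 1 * M := by
          gcongr
          · exact hs1 t
          · exact hM _ hu
      _ = 2 * M := by ring
  · exact ((hφ _ (hlt t (hx.trans hc1))).comp x
      ((hasDerivAt_pow 2 x).mul_const (s t ^ 2))).congr_deriv (by push_cast; ring)

lemma hasDerivAt_sqrt_one_sub {u : ℝ} (hu : u < 1) :
    HasDerivAt (fun u => √(1 - u)) (-1 / (2 * √(1 - u))) u := by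
  simpa using ((hasDerivAt_id u).const_sub 1).sqrt (sub_pos.2 hu).ne'

lemma hasDerivAt_one_div_sqrt_one_sub {u : ℝ} (hu : u < 1) :
    HasDerivAt (fun u => 1 / √(1 - u)) (1 / (2 * ((1 - u) * √(1 - u)))) u := by
  have hS : 0 < √(1 - u) := Real.sqrt_pos.2 (sub_pos.2 hu)
  refine ((hasDerivAt_const u (1 : ℝ)).div (hasDerivAt_sqrt_one_sub hu) hS.ne').congr_deriv ?_
  have hS2 := Real.sq_sqrt (sub_pos.2 hu).le
  have hu' : 1 - u ≠ 0 := (sub_pos.2 hu).ne'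
  field_simp
  linear_combination -hS2

lemma continuousOn_deriv_sqrt_one_sub : ContinuousOn (fun u => -1 / (2 * √(1 - u))) (Iio 1) :=
  continuousOn_const.div (by fun_prop) fun _ hu =>
    mul_ne_zero two_ne_zero (Real.sqrt_pos.2 (sub_pos.2 hu)).ne'

lemma continuousOn_deriv_one_div_sqrt_one_sub :
    ContinuousOn (fun u => 1 / (2 * ((1 - u) * √(1 - u)))) (Iio 1) :=
  continuousOn_const.div (by fun_prop) fun _ hu =>
    mul_ne_zero two_ne_zero (mul_pos (sub_pos.2 hu) (Real.sqrt_pos.2 (sub_pos.2 hu))).ne'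

lemma one_sub_sq_mul_sin_sq_pos {k : ℝ} (hk : k ^ 2 < 1) (α : ℝ) :
    0 < 1 - k ^ 2 * sin α ^ 2 := by
  nlinarith [sq_nonneg k, sin_sq_le_one α]

theorem hasDerivAt_ellipticE {k : ℝ} (hk0 : k ≠ 0) (hk : k ^ 2 < 1) :
    HasDerivAt ellipticE ((ellipticE k - ellipticK k) / k) k := by
  have hD := one_sub_sq_mul_sin_sq_pos hk
  refine (hasDerivAt_intervalIntegral_comp_sq_mul_sq (fun _ => hasDerivAt_sqrt_one_sub)
    continuousOn_deriv_sqrt_one_sub continuous_sin sin_sq_le_one 0 (π / 2) hk).congr_deriv ?_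
  rw [ellipticE, ellipticK, ← integral_sub, ← integral_div]
  · refine integral_congr fun α _ => ?_
    have hS := Real.sq_sqrt (hD α).le
    have hS0 := Real.sqrt_pos.2 (hD α)
    field_simp
    linear_combination -hS
  · exact Continuous.intervalIntegrable (by fun_prop) _ _
  · exact Continuous.intervalIntegrable
      (by fun_prop (disch := exact fun α => (Real.sqrt_pos.2 (hD α)).ne')) _ _

lemma hasDerivAt_sin_mul_cos_div_sqrt {k : ℝ} (hk : k ^ 2 < 1) (α : ℝ) :
    HasDerivAt (fun α => sin α * cos α / √(1 - k ^ 2 * sin α ^ 2))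
      ((1 - 2 * sin α ^ 2 + k ^ 2 * sin α ^ 4) /
        ((1 - k ^ 2 * sin α ^ 2) * √(1 - k ^ 2 * sin α ^ 2))) α := by
  have hD := one_sub_sq_mul_sin_sq_pos hk α
  have hS := Real.sq_sqrt hD.le
  have hS0 := Real.sqrt_pos.2 hD
  have hsc := sin_sq_add_cos_sq α
  have hD' : HasDerivAt (fun α => 1 - k ^ 2 * sin α ^ 2) (-(2 * k ^ 2 * sin α * cos α)) α :=
    (((hasDerivAt_sin α).pow 2).const_mul (k ^ 2)).const_sub 1 |>.congr_deriv (by push_cast; ring)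
  refine (((hasDerivAt_sin α).mul (hasDerivAt_cos α)).div (hD'.sqrt hD.ne')
    hS0.ne').congr_deriv ?_
  simp only [Pi.mul_apply]
  generalize √(1 - k ^ 2 * sin α ^ 2) = S at hS hS0 ⊢
  rw [← hS]
  field_simp
  linear_combination (cos α ^ 2 - sin α ^ 2) * hS + hsc

lemma integral_deriv_sin_mul_cos_div_sqrt_eq_zero {k : ℝ} (hk : k ^ 2 < 1) :
    ∫ α in 0..π / 2, (1 - 2 * sin α ^ 2 + k ^ 2 * sin α ^ 4) /
        ((1 - k ^ 2 * sin α ^ 2) * √(1 - k ^ 2 * sin α ^ 2)) = 0 := by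
  have hD := one_sub_sq_mul_sin_sq_pos hk
  rw [integral_eq_sub_of_hasDerivAt (fun α _ => hasDerivAt_sin_mul_cos_div_sqrt hk α)
    (Continuous.intervalIntegrable (by
      fun_prop (disch := exact fun α => (mul_pos (hD α) (Real.sqrt_pos.2 (hD α))).ne')) _ _)]
  simp

theorem hasDerivAt_ellipticK {k : ℝ} (hk0 : k ≠ 0) (hk : k ^ 2 < 1) :
    HasDerivAt ellipticK ((ellipticE k - (1 - k ^ 2) * ellipticK k) / (k * (1 - k ^ 2))) k := by
  have hD := one_sub_sq_mul_sin_sq_pos hk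
  have hk1 : 1 - k ^ 2 ≠ 0 := (sub_pos.2 hk).ne'
  refine (hasDerivAt_intervalIntegral_comp_sq_mul_sq (fun _ => hasDerivAt_one_div_sqrt_one_sub)
    continuousOn_deriv_one_div_sqrt_one_sub continuous_sin sin_sq_le_one 0 (π / 2)
    hk).congr_deriv ?_
  have hpt : ∀ α,
      2 * k * sin α ^ 2 * (1 / (2 * ((1 - k ^ 2 * sin α ^ 2) * √(1 - k ^ 2 * sin α ^ 2)))) =
        (√(1 - k ^ 2 * sin α ^ 2) - (1 - k ^ 2) * (1 / √(1 - k ^ 2 * sin α ^ 2)) -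
          k ^ 2 * ((1 - 2 * sin α ^ 2 + k ^ 2 * sin α ^ 4) /
            ((1 - k ^ 2 * sin α ^ 2) * √(1 - k ^ 2 * sin α ^ 2)))) / (k * (1 - k ^ 2)) := by
    intro α
    have hS := Real.sq_sqrt (hD α).le
    have hS0 := Real.sqrt_pos.2 (hD α)
    have hDα := (hD α).ne'
    generalize √(1 - k ^ 2 * sin α ^ 2) = S at hS hS0 ⊢
    field_simp
    linear_combination (k ^ 2 * sin α ^ 2 - 1) * hS
  rw [integral_congr fun α _ => hpt α, integral_div, integral_sub, integral_sub,
    integral_const_mul, integral_const_mul, integral_deriv_sin_mul_cos_div_sqrt_eq_zero hk,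
    mul_zero, sub_zero]
  · rfl
  all_goals
    have hS : ∀ α, √(1 - k ^ 2 * sin α ^ 2) ≠ 0 := fun α => (Real.sqrt_pos.2 (hD α)).ne'
    have hDS : ∀ α, (1 - k ^ 2 * sin α ^ 2) * √(1 - k ^ 2 * sin α ^ 2) ≠ 0 :=
      fun α => mul_ne_zero (hD α).ne' (hS α)
    exact Continuous.intervalIntegrable (by fun_prop (disch := first | exact hS | exact hDS)) _ _

theorem hasDerivAt_ellipticE_mul_ellipticK {k : ℝ} (hk0 : k ≠ 0) (hk : k ^ 2 < 1) :
    HasDerivAt (fun k => ellipticE k * ellipticK k)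
      ((ellipticE k ^ 2 - (1 - k ^ 2) * ellipticK k ^ 2) / (k * (1 - k ^ 2))) k := by
  have hk1 : 1 - k ^ 2 ≠ 0 := (sub_pos.2 hk).ne'
  refine ((hasDerivAt_ellipticE hk0 hk).mul (hasDerivAt_ellipticK hk0 hk)).congr_deriv ?_
  field_simp
  ring

lemma kappaT_sq (τ : ℝ) : kappaT τ ^ 2 = exp (-8 * τ) := by
  rw [kappaT, ← exp_nat_mul]
  ring_nf

lemma kappa_sq_add_kappaT_sq {τ : ℝ} (hτ : 0 ≤ τ) : kappa τ ^ 2 + kappaT τ ^ 2 = 1 := by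
  rw [kappa, kappaT_sq, sq_sqrt (sub_nonneg.2 (exp_le_one_iff.2 (by linarith)))]
  ring

lemma kappa_pos {τ : ℝ} (hτ : 0 < τ) : 0 < kappa τ :=
  sqrt_pos.2 (sub_pos.2 (exp_lt_one_iff.2 (by linarith)))

lemma hasDerivAt_kappa {τ : ℝ} (hτ : 0 < τ) :
    HasDerivAt kappa (4 * kappaT τ ^ 2 / kappa τ) τ := by
  have hk0 := kappa_pos hτ
  refine ((((hasDerivAt_id' τ).const_mul (-8 : ℝ)).exp.const_sub 1).sqrt
    (sqrt_pos.1 hk0).ne').congr_deriv ?_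
  rw [kappaT_sq]
  rw [kappa] at hk0 ⊢
  field_simp
  ring

/-- For every τ > 0, G₁₂ is differentiable at τ with the stated derivative. -/
theorem stmt_3 (τ : ℝ) (hτ : 0 < τ) :
    HasDerivAt G₁₂
      ((16 / (Real.pi ^ 2 * kappa τ ^ 2)) *
        (ellipticE (kappa τ) ^ 2 - kappaT τ ^ 2 * ellipticK (kappa τ) ^ 2)) τ := by
  have hk0 := kappa_pos hτ
  have hsum := kappa_sq_add_kappaT_sq hτ.le
  have hkT : 0 < kappaT τ := exp_pos _
  have hk : kappa τ ^ 2 < 1 := by nlinarith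
  refine (((hasDerivAt_ellipticE_mul_ellipticK hk0.ne' hk).comp τ (hasDerivAt_kappa hτ)).const_mul
    (4 / π ^ 2)).congr_deriv ?_
  rw [show 1 - kappa τ ^ 2 = kappaT τ ^ 2 by linarith]
  field_simp
  ring
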